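/- For n ≥ 2 and every unitary U′ in the Clifford+CS group 𝒥ₙ^{CS}, every entry of the channel representation Û′ is a dyadic rational, i.e. lies in the ring ℤ[1/2] ⊂ ℝ. -/

import Mathlib

open Matrix Complex

/-- Length-`n` vectors over `𝔽₂`, indexing computational basis states of `n` qubits. -/
abbrev QVec (n : ℕ) := Fin n → ZMod 2

/-- Integer (here: natural number) dot product of two 0/1 vectors. -/
def dotN {n : ℕ} (a b : QVec n) : ℕ := ∑ i, (a i).val * (b i).val

/-- The `n`-qubit Pauli matrix `P_{a,b}`. -/
noncomputable def Pauli {n : ℕ} (a b : QVec n) : Matrix (QVec n) (QVec n) ℂ :=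
  fun x y => if x = y + a then Complex.I ^ dotN a b * (-1 : ℂ) ^ dotN b y else 0

/-- A `2^n × 2^n` unitary is Clifford if it maps every Pauli matrix to a
Pauli matrix up to a sign `±1`, under conjugation. -/
def IsClifford {n : ℕ} (C : Matrix (QVec n) (QVec n) ℂ) : Prop :=
  C ∈ Matrix.unitaryGroup (QVec n) ℂ ∧
    ∀ a b : QVec n, ∃ a' b' : QVec n, ∃ ε : ℂ, (ε = 1 ∨ ε = -1) ∧
      C * Pauli a b * Cᴴ = ε • Pauli a' b'

/-- The channel representation `Û` of a `2^n × 2^n` matrix `U`: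
rows/columns indexed by Pauli matrices, `Û_{rs} = (1/2^n) Tr(P_r U P_s U†)`. -/
noncomputable def chan {n : ℕ} (U : Matrix (QVec n) (QVec n) ℂ) :
    Matrix (QVec n × QVec n) (QVec n × QVec n) ℂ :=
  fun r s => ((1 : ℂ) / 2 ^ n) * Matrix.trace (Pauli r.1 r.2 * U * Pauli s.1 s.2 * Uᴴ)

/-- The gate `CS ⊗ I_{2^{n-2}}`, where `CS = diag(1,1,1,i)` acts on the first two qubits. -/
noncomputable def CSgate (n : ℕ) : Matrix (QVec n) (QVec n) ℂ :=
  Matrix.diagonal fun x =>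
    if h : 1 < n then
      (if x ⟨0, Nat.lt_of_lt_of_le Nat.zero_lt_one h.le⟩ = 1 ∧ x ⟨1, h⟩ = 1 then Complex.I else 1)
    else 1

/-- The Clifford+CS group `𝒥ₙ^{CS}`: the subgroup of the unitary group generated by the
Clifford unitaries together with `CS ⊗ I_{2^{n-2}}`. -/
noncomputable def CliffordCSGroup (n : ℕ) : Subgroup (Matrix.unitaryGroup (QVec n) ℂ) :=
  Subgroup.closure
    {u | IsClifford (u : Matrix (QVec n) (QVec n) ℂ) ∨ (u : Matrix (QVec n) (QVec n) ℂ) = CSgate n}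

/-- `G_{P₁P₂} = ((3+i)/4) I + ((1−i)/4)(P₁ + P₂ − P₁P₂)`. -/
noncomputable def Ggate {n : ℕ} (P₁ P₂ : Matrix (QVec n) (QVec n) ℂ) :
    Matrix (QVec n) (QVec n) ℂ :=
  ((3 + Complex.I) / 4) • (1 : Matrix (QVec n) (QVec n) ℂ) +
    ((1 - Complex.I) / 4) • (P₁ + P₂ - P₁ * P₂)

section ChanAux


/-- dyadic rationals predicate -/
def Dy (z : ℂ) : Prop := ∃ (a : ℤ) (k : ℕ), z = (a : ℂ) / 2 ^ k

lemma Dy.add {z w : ℂ} (hz : Dy z) (hw : Dy w) : Dy (z + w) := by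
  obtain ⟨a, k, rfl⟩ := hz; obtain ⟨b, m, rfl⟩ := hw
  refine ⟨a * 2 ^ m + b * 2 ^ k, k + m, ?_⟩
  push_cast
  field_simp
  ring_nf

lemma Dy.mul {z w : ℂ} (hz : Dy z) (hw : Dy w) : Dy (z * w) := by
  obtain ⟨a, k, rfl⟩ := hz; obtain ⟨b, m, rfl⟩ := hw
  refine ⟨a * b, k + m, ?_⟩
  push_cast
  field_simp
  ring_nf

lemma Dy.zero : Dy 0 := ⟨0, 0, by simp⟩

lemma Dy.sum {ι : Type*} (s : Finset ι) (f : ι → ℂ) (h : ∀ i ∈ s, Dy (f i)) :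
    Dy (∑ i ∈ s, f i) := by
  classical
  induction s using Finset.induction with
  | empty => simpa using Dy.zero
  | insert _ _ hx ih =>
    rw [Finset.sum_insert hx]
    exact (h _ (Finset.mem_insert_self _ _)).add (ih fun i hi => h i (Finset.mem_insert_of_mem hi))

/-- Gaussian integers as a subring of ℂ -/
noncomputable def Gau : Subring ℂ := Subring.closure {Complex.I}

lemma Gau.classify {z : ℂ} (hz : z ∈ Gau) : ∃ p q : ℤ, z = (p : ℂ) + (q : ℂ) * Complex.I := by
  induction hz using Subring.closure_induction with
  | mem x hx => exact ⟨0, 1, by simp at hx; simp [hx]⟩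
  | zero => exact ⟨0, 0, by simp⟩
  | one => exact ⟨1, 0, by simp⟩
  | add x y hx hy ihx ihy =>
    obtain ⟨p, q, rfl⟩ := ihx; obtain ⟨p', q', rfl⟩ := ihy
    exact ⟨p + p', q + q', by push_cast; ring⟩
  | neg x hx ihx =>
    obtain ⟨p, q, rfl⟩ := ihx; exact ⟨-p, -q, by push_cast; ring⟩
  | mul x y hx hy ihx ihy =>
    obtain ⟨p, q, rfl⟩ := ihx; obtain ⟨p', q', rfl⟩ := ihy
    refine ⟨p * p' - q * q', p * q' + q * p', ?_⟩
    have : Complex.I * Complex.I = -1 := Complex.I_mul_I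
    push_cast
    ring_nf
    rw [Complex.I_sq]
    ring

lemma Gau.I_mem : Complex.I ∈ Gau := Subring.subset_closure rfl

lemma Gau.I_pow_mem (m : ℕ) : Complex.I ^ m ∈ Gau := pow_mem Gau.I_mem m

lemma Gau.neg_one_pow_mem (m : ℕ) : (-1 : ℂ) ^ m ∈ Gau := pow_mem (neg_mem (one_mem _)) m

lemma qvec_add_self {n : ℕ} (a : QVec n) : a + a = 0 := by
  funext i
  show a i + a i = 0
  exact CharTwo.add_self_eq_zero _

lemma qvec_add_cancel {n : ℕ} (y a : QVec n) : y + a + a = y := by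
  rw [add_assoc, qvec_add_self, add_zero]

lemma neg_one_pow_congr' {m k : ℕ} (h : (m : ZMod 2) = (k : ZMod 2)) :
    (-1 : ℂ) ^ m = (-1 : ℂ) ^ k := by
  have hiff : ∀ j : ℕ, (j : ZMod 2) = 0 ↔ Even j := by
    intro j
    rw [ZMod.natCast_eq_zero_iff]
    exact ⟨fun ⟨c, hc⟩ => ⟨c, by omega⟩, fun ⟨c, hc⟩ => ⟨c, by omega⟩⟩
  rcases Nat.even_or_odd m with hm | hm
  · have hk : Even k := by rw [← hiff, ← h, hiff]; exact hm
    rw [hm.neg_one_pow, hk.neg_one_pow]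
  · have hk : Odd k := by
      rcases Nat.even_or_odd k with h' | h'
      · exfalso
        have := (hiff k).mpr h'
        rw [← h, hiff] at this
        exact (Nat.not_even_iff_odd.mpr hm) this
      · exact h'
    rw [hm.neg_one_pow, hk.neg_one_pow]

lemma dotN_cast {n : ℕ} (a b : QVec n) : ((dotN a b : ℕ) : ZMod 2) = ∑ i, a i * b i := by
  simp only [dotN, Nat.cast_sum, Nat.cast_mul, ZMod.natCast_val, ZMod.cast_id]

lemma dotN_comm {n : ℕ} (a b : QVec n) : dotN a b = dotN b a := by
  simp only [dotN, mul_comm]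

lemma neg_one_pow_dotN_add_right {n : ℕ} (b y a : QVec n) :
    (-1 : ℂ) ^ dotN b (y + a) = (-1 : ℂ) ^ dotN b y * (-1 : ℂ) ^ dotN b a := by
  rw [← pow_add]
  apply neg_one_pow_congr'
  rw [dotN_cast, Nat.cast_add, dotN_cast, dotN_cast]
  rw [← Finset.sum_add_distrib]
  exact Finset.sum_congr rfl fun i _ => by simp [Pi.add_apply, mul_add]

lemma pauli_hermitian {n : ℕ} (a b : QVec n) : (Pauli a b)ᴴ = Pauli a b := by
  ext x y
  simp only [conjTranspose_apply, Pauli]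
  by_cases h : y = x + a
  · have hx : x = y + a := by rw [h, qvec_add_cancel]
    rw [if_pos h, if_pos hx]
    have hbyx : (-1 : ℂ) ^ dotN b x = (-1 : ℂ) ^ dotN b y * (-1 : ℂ) ^ dotN b a := by
      conv_lhs => rw [hx]
      exact neg_one_pow_dotN_add_right b y a
    have h2 : ((-1 : ℂ) ^ dotN a b) * ((-1 : ℂ) ^ dotN a b) = 1 := by
      rw [← pow_add]
      exact Even.neg_one_pow ⟨dotN a b, rfl⟩
    simp only [star_mul', star_pow, Complex.star_def, Complex.conj_I, map_neg, _root_.map_one]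
    rw [hbyx, dotN_comm b a, neg_pow]
    linear_combination (Complex.I ^ dotN a b * (-1 : ℂ) ^ dotN b y) * h2
  · have hx : ¬ x = y + a := fun hc => h (by rw [hc, qvec_add_cancel])
    rw [if_neg h, if_neg hx, star_zero]

lemma zmod2_sum (g : ZMod 2 → ℂ) : ∑ x, g x = g 0 + g 1 := by
  rw [show (Finset.univ : Finset (ZMod 2)) = {0, 1} from by decide,
    Finset.sum_insert (by decide), Finset.sum_singleton]

lemma char_sum {n : ℕ} (c : QVec n) :
    ∑ b : QVec n, (-1 : ℂ) ^ dotN b c = if c = 0 then ((2 : ℂ) ^ n) else 0 := by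
  have h1 : ∀ b : QVec n, (-1 : ℂ) ^ dotN b c = ∏ i, (-1 : ℂ) ^ ((b i).val * (c i).val) := by
    intro b
    rw [dotN, ← Finset.prod_pow_eq_pow_sum]
  rw [Finset.sum_congr rfl fun b _ => h1 b]
  rw [← Fintype.prod_sum (fun (i : Fin n) (x : ZMod 2) => (-1 : ℂ) ^ (x.val * (c i).val))]
  have h2 : ∀ i : Fin n, ∑ x : ZMod 2, (-1 : ℂ) ^ (x.val * (c i).val)
      = if c i = 0 then 2 else 0 := by
    intro i
    rw [zmod2_sum]
    rcases (by decide : ∀ u : ZMod 2, u = 0 ∨ u = 1) (c i) with h | h <;> rw [h] <;> norm_num [show ZMod.val (0 : ZMod 2) = 0 from rfl, show ZMod.val (1 : ZMod 2) = 1 from rfl]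
  rw [Finset.prod_congr rfl fun i _ => h2 i]
  by_cases hc : c = 0
  · rw [if_pos hc]
    rw [Finset.prod_congr rfl fun i _ => if_pos (by rw [hc]; rfl)]
    simp
  · rw [if_neg hc]
    obtain ⟨i, hi⟩ : ∃ i, c i ≠ 0 := by
      by_contra hcon
      push_neg at hcon
      exact hc (funext hcon)
    exact Finset.prod_eq_zero (Finset.mem_univ i) (by rw [if_neg hi])

lemma pauli_eq_iff {n : ℕ} (x y a : QVec n) : x = y + a ↔ a = x + y := by
  constructor
  · intro h; rw [h, add_comm y a, add_assoc, qvec_add_self, add_zero]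
  · intro h; rw [h, add_comm x y, ← add_assoc, qvec_add_self, zero_add]

lemma trace_pauli_mul {n : ℕ} (a b : QVec n) (A : Matrix (QVec n) (QVec n) ℂ) :
    Matrix.trace (Pauli a b * A)
      = ∑ z, Complex.I ^ dotN a b * (-1 : ℂ) ^ dotN b (z + a) * A (z + a) z := by
  simp only [Matrix.trace, Matrix.diag]
  refine Finset.sum_congr rfl fun z _ => ?_
  rw [Matrix.mul_apply]
  rw [Finset.sum_eq_single (z + a)]
  · rw [show Pauli a b z (z + a) = Complex.I ^ dotN a b * (-1 : ℂ) ^ dotN b (z + a) from by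
      simp only [Pauli]; rw [if_pos (qvec_add_cancel z a).symm]]
  · intro w _ hw
    have hne : ¬ z = w + a := fun hc => hw (by rw [hc, qvec_add_cancel])
    simp only [Pauli]; rw [if_neg hne, zero_mul]
  · intro h; exact absurd (Finset.mem_univ _) h

lemma pauli_expand_entry {n : ℕ} (A : Matrix (QVec n) (QVec n) ℂ) (x y : QVec n) :
    ∑ t : QVec n × QVec n, Matrix.trace (Pauli t.1 t.2 * A) * Pauli t.1 t.2 x y
      = 2 ^ n * A x y := by
  rw [Fintype.sum_prod_type]
  rw [Finset.sum_eq_single (x + y)]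
  rotate_left
  · intro a _ ha
    apply Finset.sum_eq_zero; intro b _
    have hne : ¬ x = y + a := fun hc => ha ((pauli_eq_iff x y a).mp hc)
    simp only [Pauli]; rw [if_neg hne, mul_zero]
  · intro h; exact absurd (Finset.mem_univ _) h
  set a := x + y with hadef
  have hxy : x = y + a := (pauli_eq_iff x y a).mpr rfl
  have hstep : ∀ b : QVec n,
      Matrix.trace (Pauli a b * A) * Pauli a b x y
        = ∑ z, A (z + a) z * (-1 : ℂ) ^ dotN b (z + y) := by
    intro b
    rw [trace_pauli_mul]
    simp only [Pauli]
    rw [if_pos hxy]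
    rw [Finset.sum_mul]
    refine Finset.sum_congr rfl fun z _ => ?_
    have hII : Complex.I ^ dotN a b * Complex.I ^ dotN a b = (-1 : ℂ) ^ dotN a b := by
      rw [← mul_pow, Complex.I_mul_I]
    have h2 : (-1 : ℂ) ^ dotN a b * (-1 : ℂ) ^ dotN b a = 1 := by
      rw [dotN_comm b a, ← pow_add]; exact Even.neg_one_pow ⟨dotN a b, rfl⟩
    rw [neg_one_pow_dotN_add_right b z a, neg_one_pow_dotN_add_right b z y]
    linear_combination ((-1 : ℂ) ^ dotN b z * A (z + a) z * (-1 : ℂ) ^ dotN b y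
        * (-1 : ℂ) ^ dotN b a) * hII
      + ((-1 : ℂ) ^ dotN b z * A (z + a) z * (-1 : ℂ) ^ dotN b y) * h2
  rw [Finset.sum_congr rfl fun b _ => hstep b]
  rw [Finset.sum_comm]
  have hz : ∀ z : QVec n, ∑ b : QVec n, A (z + a) z * (-1 : ℂ) ^ dotN b (z + y)
      = A (z + a) z * (if z + y = 0 then (2 : ℂ) ^ n else 0) := by
    intro z; rw [← Finset.mul_sum, char_sum]
  rw [Finset.sum_congr rfl fun z _ => hz z]
  rw [Finset.sum_eq_single y]
  · rw [if_pos (qvec_add_self y),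
      show y + a = x from by rw [hadef, add_comm x y, ← add_assoc, qvec_add_self, zero_add]]
    ring
  · intro z _ hzy
    have : ¬ z + y = 0 := fun hc => hzy (by rw [← qvec_add_cancel z y, hc, zero_add])
    rw [if_neg this, mul_zero]
  · intro h; exact absurd (Finset.mem_univ _) h

lemma chan_real {n : ℕ} (U : Matrix (QVec n) (QVec n) ℂ) (r s : QVec n × QVec n) :
    (starRingEnd ℂ) (chan U r s) = chan U r s := by
  have hc : (starRingEnd ℂ) ((1 : ℂ) / 2 ^ n) = (1 : ℂ) / 2 ^ n := by
    rw [map_div₀, _root_.map_one, map_pow, Complex.conj_ofNat]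
  simp only [chan, _root_.map_mul, hc]
  congr 1
  have h1 : (Pauli r.1 r.2 * U * Pauli s.1 s.2 * Uᴴ)ᴴ
      = U * Pauli s.1 s.2 * Uᴴ * Pauli r.1 r.2 := by
    simp only [conjTranspose_mul, conjTranspose_conjTranspose, pauli_hermitian,
      Matrix.mul_assoc]
  have h2 := Matrix.trace_conjTranspose (Pauli r.1 r.2 * U * Pauli s.1 s.2 * Uᴴ)
  rw [h1] at h2
  have h3 : Matrix.trace (U * Pauli s.1 s.2 * Uᴴ * Pauli r.1 r.2)
      = Matrix.trace (Pauli r.1 r.2 * U * Pauli s.1 s.2 * Uᴴ) := by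
    rw [Matrix.trace_mul_comm]
    simp only [Matrix.mul_assoc]
  rw [h3] at h2
  exact h2.symm

lemma chan_conjTranspose {n : ℕ} (U : Matrix (QVec n) (QVec n) ℂ) (r s : QVec n × QVec n) :
    chan Uᴴ r s = chan U s r := by
  have h : Matrix.trace (Pauli r.1 r.2 * Uᴴ * Pauli s.1 s.2 * Uᴴᴴ)
      = Matrix.trace (Pauli s.1 s.2 * U * Pauli r.1 r.2 * Uᴴ) := by
    rw [conjTranspose_conjTranspose]
    rw [show Pauli r.1 r.2 * Uᴴ * Pauli s.1 s.2 * U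
        = (Pauli r.1 r.2 * Uᴴ) * (Pauli s.1 s.2 * U) from by simp only [Matrix.mul_assoc]]
    rw [Matrix.trace_mul_comm]
    simp only [Matrix.mul_assoc]
  simp only [chan, h]

lemma chan_mul {n : ℕ} (U V : Matrix (QVec n) (QVec n) ℂ) (r s : QVec n × QVec n) :
    chan (U * V) r s = ∑ t : QVec n × QVec n, chan U r t * chan V t s := by
  classical
  set A := V * Pauli s.1 s.2 * Vᴴ with hA
  have hexp : Pauli r.1 r.2 * (U * V) * Pauli s.1 s.2 * (U * V)ᴴ
      = Pauli r.1 r.2 * U * A * Uᴴ := by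
    rw [conjTranspose_mul]; simp only [hA, Matrix.mul_assoc]
  have hAexp : A = ((1 : ℂ) / 2 ^ n) •
      ∑ t : QVec n × QVec n, Matrix.trace (Pauli t.1 t.2 * A) • Pauli t.1 t.2 := by
    ext x y
    simp only [Matrix.smul_apply, Matrix.sum_apply, smul_eq_mul]
    rw [pauli_expand_entry A x y]
    have h2 : (2 : ℂ) ^ n ≠ 0 := pow_ne_zero _ two_ne_zero
    field_simp
  have htr : Matrix.trace (Pauli r.1 r.2 * U * A * Uᴴ)
      = ((1 : ℂ) / 2 ^ n) * ∑ t : QVec n × QVec n,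
          Matrix.trace (Pauli t.1 t.2 * A) *
            Matrix.trace (Pauli r.1 r.2 * U * Pauli t.1 t.2 * Uᴴ) := by
    conv_lhs => rw [show Pauli r.1 r.2 * U * A * Uᴴ
        = Pauli r.1 r.2 * U * (((1 : ℂ) / 2 ^ n) •
            ∑ t : QVec n × QVec n, Matrix.trace (Pauli t.1 t.2 * A) • Pauli t.1 t.2) * Uᴴ from by
          rw [← hAexp]]
    rw [Matrix.mul_smul, Matrix.smul_mul, trace_smul, smul_eq_mul]
    congr 1
    rw [Finset.mul_sum Finset.univ
      (fun t : QVec n × QVec n => Matrix.trace (Pauli t.1 t.2 * A) • Pauli t.1 t.2)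
      (Pauli r.1 r.2 * U)]
    rw [Finset.sum_mul]
    simp only [Matrix.trace_sum]
    refine Finset.sum_congr rfl fun t _ => ?_
    rw [Matrix.mul_smul, Matrix.smul_mul, trace_smul, smul_eq_mul]
  show ((1 : ℂ) / 2 ^ n) * Matrix.trace (Pauli r.1 r.2 * (U * V) * Pauli s.1 s.2 * (U * V)ᴴ) = _
  rw [hexp]
  rw [htr]
  rw [Finset.mul_sum Finset.univ
    (fun t : QVec n × QVec n => Matrix.trace (Pauli t.1 t.2 * A) *
      Matrix.trace (Pauli r.1 r.2 * U * Pauli t.1 t.2 * Uᴴ)) ((1 : ℂ) / 2 ^ n)]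
  rw [Finset.mul_sum Finset.univ
    (fun t : QVec n × QVec n => ((1 : ℂ) / 2 ^ n) * (Matrix.trace (Pauli t.1 t.2 * A) *
      Matrix.trace (Pauli r.1 r.2 * U * Pauli t.1 t.2 * Uᴴ))) ((1 : ℂ) / 2 ^ n)]
  have hterm : ∀ t : QVec n × QVec n,
      ((1 : ℂ) / 2 ^ n) * (((1 : ℂ) / 2 ^ n) * (Matrix.trace (Pauli t.1 t.2 * A) *
        Matrix.trace (Pauli r.1 r.2 * U * Pauli t.1 t.2 * Uᴴ)))
      = chan U r t * chan V t s := by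
    intro t
    show _ = (((1 : ℂ) / 2 ^ n) * Matrix.trace (Pauli r.1 r.2 * U * Pauli t.1 t.2 * Uᴴ)) *
        (((1 : ℂ) / 2 ^ n) * Matrix.trace (Pauli t.1 t.2 * V * Pauli s.1 s.2 * Vᴴ))
    rw [show Pauli t.1 t.2 * V * Pauli s.1 s.2 * Vᴴ = Pauli t.1 t.2 * A from by
      simp only [hA, Matrix.mul_assoc]]
    ring
  exact Finset.sum_congr rfl fun t _ => hterm t

lemma Gau.pauli_entry {n : ℕ} (a b : QVec n) (x y : QVec n) : Pauli a b x y ∈ Gau := by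
  unfold Pauli
  split_ifs
  · exact mul_mem (Gau.I_pow_mem _) (Gau.neg_one_pow_mem _)
  · exact zero_mem _

lemma Gau.mul_entry {n : ℕ} {A B : Matrix (QVec n) (QVec n) ℂ}
    (hA : ∀ x y, A x y ∈ Gau) (hB : ∀ x y, B x y ∈ Gau) : ∀ x y, (A * B) x y ∈ Gau := by
  intro x y
  rw [Matrix.mul_apply]
  exact Subring.sum_mem _ fun z _ => mul_mem (hA _ _) (hB _ _)

lemma Gau.trace_entry {n : ℕ} {A : Matrix (QVec n) (QVec n) ℂ}
    (hA : ∀ x y, A x y ∈ Gau) : Matrix.trace A ∈ Gau :=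
  Subring.sum_mem _ fun z _ => hA z z

lemma dy_of_gau_real {z : ℂ} (k : ℕ) (hz : (2 : ℂ) ^ k * z ∈ Gau)
    (hreal : (starRingEnd ℂ) z = z) : Dy z := by
  obtain ⟨p, q, hpq⟩ := Gau.classify hz
  have hconj : (starRingEnd ℂ) ((2 : ℂ) ^ k * z) = (2 : ℂ) ^ k * z := by
    rw [_root_.map_mul, hreal, map_pow, Complex.conj_ofNat]
  rw [hpq] at hconj
  have hcc : (p : ℂ) - (q : ℂ) * Complex.I = (p : ℂ) + (q : ℂ) * Complex.I := by
    rw [← hconj]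
    simp only [map_add, _root_.map_mul, Complex.conj_I, map_intCast]
    ring
  have h2 : (q : ℂ) * Complex.I = 0 := by linear_combination (-(1 : ℂ) / 2) * hcc
  have hq : (q : ℂ) = 0 := by
    rcases mul_eq_zero.mp h2 with h | h
    · exact h
    · exact absurd h Complex.I_ne_zero
  refine ⟨p, k, ?_⟩
  have h2k : (2 : ℂ) ^ k ≠ 0 := pow_ne_zero _ two_ne_zero
  rw [hq, zero_mul, add_zero] at hpq
  field_simp [← hpq]
  linear_combination hpq

lemma Gau.cs_entry (n : ℕ) (x y : QVec n) : CSgate n x y ∈ Gau := by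
  unfold CSgate
  rw [Matrix.diagonal_apply]
  split_ifs
  all_goals first
    | exact Gau.I_mem
    | exact one_mem _
    | exact zero_mem _

lemma Gau.csH_entry (n : ℕ) (x y : QVec n) : (CSgate n)ᴴ x y ∈ Gau := by
  rw [Matrix.conjTranspose_apply]
  unfold CSgate
  rw [Matrix.diagonal_apply]
  split_ifs
  all_goals simp only [star_one, star_zero, Complex.star_def, Complex.conj_I]
  all_goals first
    | exact neg_mem Gau.I_mem
    | exact one_mem _
    | exact zero_mem _


end ChanAux

/-- For `n ≥ 2` and every unitary `U′` in the Clifford+CS group, every entry of `Û′`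
is a dyadic rational: it can be written as `a/2^k` with `a ∈ ℤ`, `k ∈ ℕ`. -/
theorem chan_cliffordCS_ring (n : ℕ) (hn : 2 ≤ n) (U : Matrix.unitaryGroup (QVec n) ℂ)
    (hU : U ∈ CliffordCSGroup n) (r s : QVec n × QVec n) :
    ∃ (a : ℤ) (k : ℕ),
      chan (U : Matrix (QVec n) (QVec n) ℂ) r s = (a : ℂ) / 2 ^ k := by
  suffices h : ∀ r s : QVec n × QVec n, Dy (chan (U : Matrix (QVec n) (QVec n) ℂ) r s) from
    h r s
  have h2k : (2 : ℂ) ^ n ≠ 0 := pow_ne_zero _ two_ne_zero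
  induction hU using Subgroup.closure_induction with
  | mem u hu =>
    intro r s
    rcases hu with hC | hCS
    · obtain ⟨-, hP⟩ := hC
      obtain ⟨a', b', ε, hε, heq⟩ := hP s.1 s.2
      apply dy_of_gau_real n _ (chan_real _ r s)
      have hval : (2 : ℂ) ^ n * chan (u : Matrix (QVec n) (QVec n) ℂ) r s
          = ε * Matrix.trace (Pauli r.1 r.2 * Pauli a' b') := by
        show (2 : ℂ) ^ n * (((1 : ℂ) / 2 ^ n) * _) = _
        rw [show Pauli r.1 r.2 * (u : Matrix (QVec n) (QVec n) ℂ) * Pauli s.1 s.2 *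
              (u : Matrix (QVec n) (QVec n) ℂ)ᴴ
            = Pauli r.1 r.2 * ((u : Matrix (QVec n) (QVec n) ℂ) * Pauli s.1 s.2 *
              (u : Matrix (QVec n) (QVec n) ℂ)ᴴ) from by simp only [Matrix.mul_assoc], heq,
          Matrix.mul_smul, trace_smul, smul_eq_mul]
        field_simp
      rw [hval]
      refine mul_mem ?_ (Gau.trace_entry (Gau.mul_entry (Gau.pauli_entry _ _) (Gau.pauli_entry _ _)))
      rcases hε with h | h <;> rw [h]
      · exact one_mem _
      · exact neg_mem (one_mem _)
    · apply dy_of_gau_real n _ (chan_real _ r s)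
      have hval : (2 : ℂ) ^ n * chan (u : Matrix (QVec n) (QVec n) ℂ) r s
          = Matrix.trace (Pauli r.1 r.2 * (u : Matrix (QVec n) (QVec n) ℂ) * Pauli s.1 s.2 *
              (u : Matrix (QVec n) (QVec n) ℂ)ᴴ) := by
        show (2 : ℂ) ^ n * (((1 : ℂ) / 2 ^ n) * _) = _
        field_simp
      rw [hval, hCS]
      exact Gau.trace_entry (Gau.mul_entry (Gau.mul_entry
        (Gau.mul_entry (Gau.pauli_entry _ _) (Gau.cs_entry n)) (Gau.pauli_entry _ _))
        (Gau.csH_entry n))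
  | one =>
    intro r s
    apply dy_of_gau_real n _ (chan_real _ r s)
    have hval : (2 : ℂ) ^ n * chan ((1 : Matrix.unitaryGroup (QVec n) ℂ) :
          Matrix (QVec n) (QVec n) ℂ) r s
        = Matrix.trace (Pauli r.1 r.2 * (1 : Matrix (QVec n) (QVec n) ℂ) * Pauli s.1 s.2 *
            (1 : Matrix (QVec n) (QVec n) ℂ)ᴴ) := by
      show (2 : ℂ) ^ n * (((1 : ℂ) / 2 ^ n) * _) = _
      field_simp
      rfl
    rw [hval]
    have hone : ∀ x y, (1 : Matrix (QVec n) (QVec n) ℂ) x y ∈ Gau := by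
      intro x y
      rw [Matrix.one_apply]
      split_ifs
      · exact one_mem _
      · exact zero_mem _
    have honeH : ∀ x y, (1 : Matrix (QVec n) (QVec n) ℂ)ᴴ x y ∈ Gau := by
      rw [Matrix.conjTranspose_one]; exact hone
    exact Gau.trace_entry (Gau.mul_entry (Gau.mul_entry
      (Gau.mul_entry (Gau.pauli_entry _ _) hone) (Gau.pauli_entry _ _)) honeH)
  | mul x y hx hy ihx ihy =>
    intro r s
    rw [show ((x * y : Matrix.unitaryGroup (QVec n) ℂ) : Matrix (QVec n) (QVec n) ℂ)
        = (x : Matrix (QVec n) (QVec n) ℂ) * (y : Matrix (QVec n) (QVec n) ℂ) from rfl]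
    rw [chan_mul]
    exact Dy.sum _ _ fun t _ => (ihx r t).mul (ihy t s)
  | inv x hx ihx =>
    intro r s
    rw [show ((x⁻¹ : Matrix.unitaryGroup (QVec n) ℂ) : Matrix (QVec n) (QVec n) ℂ)
        = (x : Matrix (QVec n) (QVec n) ℂ)ᴴ from rfl]
    rw [chan_conjTranspose]
    exact ihx s r
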